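/- arXiv:2103.06670 — 3 statements merged into one kernel-verified Lean document; each statement's English description precedes it below -/
import Mathlib

section
/- Let E be a finite-dimensional associative unital normed algebra over ℝ, and let ν, ν', ν'' be Borel probability measures on E. For an integer k ≥ 1, let β_k = ν'^{⊞k} ⊟ ν'^{⊞k} (the law of y₁ + ⋯ + y_k − y_{k+1} − ⋯ − y_{2k} where y₁,…,y_{2k} are i.i.d. with law ν'). Then for every ξ ∈ E*, the Fourier transform (ν * β_k * ν'')^∧(ξ) is a nonnegative real number, and moreover |(ν * ν' * ν'')^∧(ξ)|^{2k} ≤ (ν * β_k * ν'')^∧(ξ). -/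
open MeasureTheory

noncomputable section

variable {E : Type*} [NormedRing E] [NormedAlgebra ℝ E] [FiniteDimensional ℝ E]
  [MeasurableSpace E] [BorelSpace E]

/-- The determinant of the left-multiplication map `y ↦ x y` on the algebra `E`. -/
def algDet (x : E) : ℝ := LinearMap.det (LinearMap.mulLeft ℝ x)

/-- The non-concentration property `NC₀(ε, κ, τ)` at scale `δ` for a Borel measure on a
finite-dimensional normed algebra `E`:
(i) mass at most `δ^τ` outside the ball of radius `δ^{-ε}`;
(ii) every translate of `S(δ^ε) = {x : |det x| ≤ δ^ε}` has mass at most `δ^τ`;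
(iii) every `ρ`-neighborhood (`ρ ≥ δ`) of a proper affine subspace has mass at most
`δ^{-ε} ρ^κ`. -/
def NCzero (ε κ τ δ : ℝ) (η : Measure E) : Prop :=
  η ((Metric.closedBall (0 : E) (δ ^ (-ε)))ᶜ) ≤ ENNReal.ofReal (δ ^ τ) ∧
  (∀ x : E, η { y : E | |algDet (y - x)| ≤ δ ^ ε } ≤ ENNReal.ofReal (δ ^ τ)) ∧
  ∀ ρ : ℝ, δ ≤ ρ → ∀ W : AffineSubspace ℝ E, W ≠ ⊤ →
    η { x : E | ∃ w ∈ (W : Set E), dist x w ≤ ρ } ≤ ENNReal.ofReal (δ ^ (-ε) * ρ ^ κ)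

/-- The non-concentration property `NC(ε, κ, τ)` at scale `δ`: the measure is a sum
`η₀ + η₁` with `η₀` satisfying `NC₀(ε, κ, τ)` at scale `δ` and `η₁` of total mass at
most `δ^τ`. -/
def NC (ε κ τ δ : ℝ) (η : Measure E) : Prop :=
  ∃ η₀ η₁ : Measure E, η = η₀ + η₁ ∧ NCzero ε κ τ δ η₀ ∧
    η₁ Set.univ ≤ ENNReal.ofReal (δ ^ τ)

/-- The Fourier transform `η̂(ξ) = ∫ e^{2πi ξ(x)} dη(x)` of a measure on `E` at a
continuous linear functional `ξ ∈ E*`. -/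
def mFourier (η : Measure E) (ξ : E →L[ℝ] ℝ) : ℂ :=
  ∫ x, Complex.exp (2 * Real.pi * Complex.I * (ξ x : ℂ)) ∂η

/-- Multiplicative convolution of two measures (for s-finite measures this is the
pushforward of `μ ⊗ ν` under `(x, y) ↦ x y`). -/
def mconv (μ ν : Measure E) : Measure E :=
  μ.bind fun x => ν.map fun y => x * y

/-- Additive convolution `μ ⊞ ν`. -/
def aconv (μ ν : Measure E) : Measure E :=
  μ.bind fun x => ν.map fun y => x + y

/-- Additive "deconvolution" `μ ⊟ ν`, the law of `x - y`. -/
def asub (μ ν : Measure E) : Measure E :=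
  μ.bind fun x => ν.map fun y => x - y

/-- `k`-fold additive convolution `μ^{⊞ k}`. -/
def aconvPow (μ : Measure E) : ℕ → Measure E
  | 0 => Measure.dirac 0
  | k + 1 => aconv μ (aconvPow μ k)

/-- The multiplicative convolution `η 0 * η 1 * ⋯ * η (s-1)`. -/
def mulConvFin : {s : ℕ} → (Fin s → Measure E) → Measure E
  | 0, _ => Measure.dirac 1
  | _ + 1, η => mconv (η 0) (mulConvFin fun i => η i.succ)

end

/-! Write `ν * Q * ν''` as the law of `x w z`, where `(x, z) ∼ ν ⊗ ν''` and `w ∼ Q` are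
independent; by Fubini its Fourier transform at `ξ` is the `ν ⊗ ν''`-average of `Q̂(ξ_{x,z})`,
with `ξ_{x,z}(w) = ξ(x w z)`. For `Q = β_k` the integrand is `|ν̂'(ξ_{x,z})|^{2k} ≥ 0`, because
the Fourier transform turns `⊞` into products and `⊟` into multiplication by the conjugate, while
for `Q = ν'` the average is `(ν * ν' * ν'')^∧(ξ)`. Jensen's inequality for `t ↦ t^{2k}`
concludes. -/

open MeasureTheory Complex
open scoped FourierTransform ComplexConjugate

namespace MeasureTheory

lemma Measure.bind_map_eq_map_prod {α β γ : Type*} [MeasurableSpace α] [MeasurableSpace β]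
    [MeasurableSpace γ] {f : α → β → γ} (hf : Measurable (Function.uncurry f))
    (μ : Measure α) (ρ : Measure β) [SFinite ρ] :
    (μ.bind fun x => ρ.map (f x)) = (μ.prod ρ).map (Function.uncurry f) := by
  have hf_left (x : α) : Measurable (f x) := hf.comp measurable_prodMk_left
  have h_kernel : Measurable fun x => ρ.map (f x) := by
    refine Measure.measurable_of_measurable_coe _ fun t ht => ?_
    simp_rw [Measure.map_apply (hf_left _) ht]
    exact measurable_measure_prodMk_left (hf ht)
  ext s hs
  rw [Measure.bind_apply hs h_kernel.aemeasurable, Measure.map_apply hf hs,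
    Measure.prod_apply (hf hs)]
  exact lintegral_congr fun x => Measure.map_apply (hf_left x) hs

lemma Measure.prod_prod_eq_map_prod_prod {α β γ : Type*} [MeasurableSpace α]
    [MeasurableSpace β] [MeasurableSpace γ] (μ : Measure α) (ρ : Measure β) (σ : Measure γ)
    [IsFiniteMeasure μ] [IsFiniteMeasure ρ] [IsFiniteMeasure σ] :
    μ.prod (ρ.prod σ) = ((μ.prod σ).prod ρ).map fun q => (q.1.1, q.2, q.1.2) := by
  refine Measure.ext_prod₃ fun {s t u} hs ht hu => ?_
  have h_preimage : (fun q : (α × γ) × β => (q.1.1, q.2, q.1.2)) ⁻¹' (s ×ˢ t ×ˢ u)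
      = (s ×ˢ u) ×ˢ t := by
    ext; simp only [Set.mem_preimage, Set.mem_prod]; tauto
  rw [Measure.map_apply (by fun_prop) (hs.prod (ht.prod hu)), h_preimage]
  simp only [Measure.prod_prod]
  ring

lemma norm_integral_pow_le_integral_norm_pow {α F : Type*} [MeasurableSpace α]
    [NormedAddCommGroup F] [NormedSpace ℝ F] {μ : Measure α} [IsProbabilityMeasure μ]
    {f : α → F} (n : ℕ) (hf : Integrable f μ) (hfn : Integrable (fun a => ‖f a‖ ^ n) μ) :
    ‖∫ a, f a ∂μ‖ ^ n ≤ ∫ a, ‖f a‖ ^ n ∂μ :=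
  calc ‖∫ a, f a ∂μ‖ ^ n ≤ (∫ a, ‖f a‖ ∂μ) ^ n :=
        pow_le_pow_left₀ (norm_nonneg _) (norm_integral_le_integral_norm f) n
    _ ≤ ∫ a, ‖f a‖ ^ n ∂μ :=
        (convexOn_pow n).map_integral_le (continuous_pow n).continuousOn isClosed_Ici
          (ae_of_all _ fun a => norm_nonneg (f a)) hf.norm hfn

end MeasureTheory

section Convolution

variable {E : Type*} [NormedRing E] [MeasurableSpace E]

lemma mconv_eq_map_prod [MeasurableMul₂ E] (μ ρ : Measure E) [SFinite ρ] :
    mconv μ ρ = (μ.prod ρ).map fun p => p.1 * p.2 :=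
  Measure.bind_map_eq_map_prod measurable_mul μ ρ

lemma aconv_eq_map_prod [MeasurableAdd₂ E] (μ ρ : Measure E) [SFinite ρ] :
    aconv μ ρ = (μ.prod ρ).map fun p => p.1 + p.2 :=
  Measure.bind_map_eq_map_prod measurable_add μ ρ

lemma asub_eq_map_prod [MeasurableSub₂ E] (μ ρ : Measure E) [SFinite ρ] :
    asub μ ρ = (μ.prod ρ).map fun p => p.1 - p.2 :=
  Measure.bind_map_eq_map_prod measurable_sub μ ρ

lemma mconv_mconv_eq_map_prod_prod [MeasurableMul₂ E] (μ ρ σ : Measure E) [IsFiniteMeasure μ]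
    [IsFiniteMeasure ρ] [IsFiniteMeasure σ] :
    mconv μ (mconv ρ σ) = ((μ.prod σ).prod ρ).map fun q => q.1.1 * q.2 * q.1.2 := by
  have h_inner : μ.prod ((ρ.prod σ).map fun p => p.1 * p.2)
      = (μ.prod (ρ.prod σ)).map (Prod.map id fun p => p.1 * p.2) := by
    conv_lhs => rw [← Measure.map_id (μ := μ)]
    exact Measure.map_prod_map _ _ measurable_id measurable_mul
  rw [mconv_eq_map_prod ρ σ, mconv_eq_map_prod, h_inner, Measure.map_map (by fun_prop)
    (by fun_prop), Measure.prod_prod_eq_map_prod_prod, Measure.map_map (by fun_prop)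
    (by fun_prop)]
  congr with q
  simp [mul_assoc]

instance isProbabilityMeasure_mconv [MeasurableMul₂ E] (μ ρ : Measure E)
    [IsProbabilityMeasure μ] [IsProbabilityMeasure ρ] : IsProbabilityMeasure (mconv μ ρ) := by
  rw [mconv_eq_map_prod]
  exact Measure.isProbabilityMeasure_map (by fun_prop)

instance isProbabilityMeasure_aconv [MeasurableAdd₂ E] (μ ρ : Measure E)
    [IsProbabilityMeasure μ] [IsProbabilityMeasure ρ] : IsProbabilityMeasure (aconv μ ρ) := by
  rw [aconv_eq_map_prod]
  exact Measure.isProbabilityMeasure_map (by fun_prop)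

instance isProbabilityMeasure_asub [MeasurableSub₂ E] (μ ρ : Measure E)
    [IsProbabilityMeasure μ] [IsProbabilityMeasure ρ] : IsProbabilityMeasure (asub μ ρ) := by
  rw [asub_eq_map_prod]
  exact Measure.isProbabilityMeasure_map (by fun_prop)

instance isProbabilityMeasure_aconvPow [MeasurableAdd₂ E] (μ : Measure E)
    [IsProbabilityMeasure μ] : (k : ℕ) → IsProbabilityMeasure (aconvPow μ k)
  | 0 => Measure.dirac.isProbabilityMeasure
  | k + 1 => by
    have := isProbabilityMeasure_aconvPow μ k
    exact isProbabilityMeasure_aconv μ (aconvPow μ k)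

end Convolution

section Fourier

variable {E : Type*} [NormedRing E] [NormedAlgebra ℝ E] [MeasurableSpace E]

lemma mFourier_eq_integral_fourierChar (η : Measure E) (ξ : E →L[ℝ] ℝ) :
    mFourier η ξ = ∫ x, (𝐞 (ξ x) : ℂ) ∂η := by
  unfold mFourier
  congr with x
  rw [Real.fourierChar_apply]
  push_cast
  ring_nf

lemma norm_mFourier_le_one (η : Measure E) [IsProbabilityMeasure η] (ξ : E →L[ℝ] ℝ) :
    ‖mFourier η ξ‖ ≤ 1 := by
  rw [mFourier_eq_integral_fourierChar]
  simpa using norm_integral_le_of_norm_le_const (μ := η) (C := 1)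
    (ae_of_all _ fun x => (Circle.norm_coe (𝐞 (ξ x))).le)

variable [BorelSpace E]

lemma mFourier_map {α : Type*} [MeasurableSpace α] (μ : Measure α) {f : α → E}
    (hf : Measurable f) (ξ : E →L[ℝ] ℝ) :
    mFourier (μ.map f) ξ = ∫ a, (𝐞 (ξ (f a)) : ℂ) ∂μ := by
  rw [mFourier_eq_integral_fourierChar, integral_map hf.aemeasurable (by fun_prop)]

variable [SecondCountableTopology E]

lemma mFourier_aconv (μ ρ : Measure E) [SFinite μ] [SFinite ρ] (ξ : E →L[ℝ] ℝ) :
    mFourier (aconv μ ρ) ξ = mFourier μ ξ * mFourier ρ ξ := by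
  rw [aconv_eq_map_prod, mFourier_map _ measurable_add, mFourier_eq_integral_fourierChar,
    mFourier_eq_integral_fourierChar, ← integral_prod_mul]
  congr with p
  rw [map_add, AddChar.map_add_eq_mul, Circle.coe_mul]

lemma mFourier_asub (μ ρ : Measure E) [SFinite μ] [SFinite ρ] (ξ : E →L[ℝ] ℝ) :
    mFourier (asub μ ρ) ξ = mFourier μ ξ * conj (mFourier ρ ξ) := by
  rw [asub_eq_map_prod, mFourier_map _ measurable_sub, mFourier_eq_integral_fourierChar,
    mFourier_eq_integral_fourierChar, ← integral_conj, ← integral_prod_mul]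
  congr with p
  rw [map_sub, sub_eq_add_neg, AddChar.map_add_eq_mul, AddChar.map_neg_eq_inv, Circle.coe_mul,
    Circle.coe_inv_eq_conj]

lemma mFourier_aconvPow (μ : Measure E) [IsProbabilityMeasure μ] (ξ : E →L[ℝ] ℝ) :
    (k : ℕ) → mFourier (aconvPow μ k) ξ = mFourier μ ξ ^ k
  | 0 => by simp [aconvPow, mFourier_eq_integral_fourierChar]
  | k + 1 => by rw [aconvPow, mFourier_aconv, mFourier_aconvPow μ ξ k, pow_succ']

lemma mFourier_asub_aconvPow (μ : Measure E) [IsProbabilityMeasure μ] (k : ℕ)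
    (ξ : E →L[ℝ] ℝ) :
    mFourier (asub (aconvPow μ k) (aconvPow μ k)) ξ = (‖mFourier μ ξ‖ ^ (2 * k) : ℝ) := by
  rw [mFourier_asub, mFourier_aconvPow, mul_conj, normSq_eq_norm_sq, norm_pow, ← pow_mul,
    mul_comm k 2]

open ContinuousLinearMap in
lemma mFourier_mconv_mconv (μ ρ σ : Measure E) [IsFiniteMeasure μ] [IsFiniteMeasure ρ]
    [IsFiniteMeasure σ] (ξ : E →L[ℝ] ℝ) :
    mFourier (mconv μ (mconv ρ σ)) ξ
      = ∫ p : E × E, mFourier ρ (ξ.comp (mulLeftRight ℝ E p.1 p.2)) ∂(μ.prod σ) := by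
  have h_int : Integrable (fun q : (E × E) × E => (𝐞 (ξ (q.1.1 * q.2 * q.1.2)) : ℂ))
      ((μ.prod σ).prod ρ) :=
    .of_bound (by fun_prop) 1 (ae_of_all _ fun q => (Circle.norm_coe _).le)
  rw [mconv_mconv_eq_map_prod_prod, mFourier_map _ (by fun_prop), integral_prod _ h_int]
  simp only [mFourier_eq_integral_fourierChar, comp_apply, mulLeftRight_apply]

open ContinuousLinearMap in
lemma stronglyMeasurable_mFourier_comp_mulLeftRight (ρ : Measure E) [SFinite ρ]
    (ξ : E →L[ℝ] ℝ) :
    StronglyMeasurable fun p : E × E => mFourier ρ (ξ.comp (mulLeftRight ℝ E p.1 p.2)) := by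
  simp only [mFourier_eq_integral_fourierChar, comp_apply, mulLeftRight_apply]
  have h_cont : Continuous fun q : (E × E) × E => (𝐞 (ξ (q.1.1 * q.2 * q.1.2)) : ℂ) := by
    fun_prop
  exact h_cont.stronglyMeasurable.integral_prod_right'

end Fourier

open ContinuousLinearMap in
theorem fourier_conv_nonneg_and_bound_general
    {E : Type*} [NormedRing E] [NormedAlgebra ℝ E] [FiniteDimensional ℝ E]
    [MeasurableSpace E] [BorelSpace E]
    (ν ν' ν'' : Measure E) [IsProbabilityMeasure ν] [IsProbabilityMeasure ν']
    [IsProbabilityMeasure ν''] (k : ℕ) (ξ : E →L[ℝ] ℝ) :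
    (mFourier (mconv ν (mconv (asub (aconvPow ν' k) (aconvPow ν' k)) ν'')) ξ).im = 0 ∧
    0 ≤ (mFourier (mconv ν (mconv (asub (aconvPow ν' k) (aconvPow ν' k)) ν'')) ξ).re ∧
    ‖mFourier (mconv ν (mconv ν' ν'')) ξ‖ ^ (2 * k)
      ≤ (mFourier (mconv ν (mconv (asub (aconvPow ν' k) (aconvPow ν' k)) ν'')) ξ).re := by
  set F : E × E → ℂ := fun p => mFourier ν' (ξ.comp (mulLeftRight ℝ E p.1 p.2))
  have h_beta : mFourier (mconv ν (mconv (asub (aconvPow ν' k) (aconvPow ν' k)) ν'')) ξ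
      = ((∫ p, ‖F p‖ ^ (2 * k) ∂(ν.prod ν'') : ℝ) : ℂ) := by
    simp only [mFourier_mconv_mconv, mFourier_asub_aconvPow, F]
    exact integral_ofReal
  have hF_meas : StronglyMeasurable F := stronglyMeasurable_mFourier_comp_mulLeftRight ν' ξ
  have hF_le (p : E × E) : ‖F p‖ ≤ 1 := norm_mFourier_le_one ν' _
  have hF_pow_le (p : E × E) : ‖‖F p‖ ^ (2 * k)‖ ≤ 1 := by
    simpa using pow_le_one₀ (norm_nonneg _) (hF_le p)
  refine ⟨by rw [h_beta, ofReal_im], by rw [h_beta, ofReal_re]; positivity, ?_⟩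
  rw [h_beta, ofReal_re, mFourier_mconv_mconv]
  exact norm_integral_pow_le_integral_norm_pow _
    (.of_bound hF_meas.aestronglyMeasurable 1 (ae_of_all _ hF_le))
    (.of_bound (hF_meas.norm.pow _).aestronglyMeasurable 1 (ae_of_all _ hF_pow_le))

/-- **Positivity and a Hölder comparison for Fourier transforms of multiplicative
convolutions** (Lemma "nu123" of the paper): with `β_k = ν'^{⊞k} ⊟ ν'^{⊞k}`, the Fourier
transform of `ν * β_k * ν''` is a nonnegative real number dominating
`|(ν * ν' * ν'')^∧(ξ)|^{2k}`. -/
theorem fourier_conv_nonneg_and_bound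
    {E : Type*} [NormedRing E] [NormedAlgebra ℝ E] [FiniteDimensional ℝ E]
    [MeasurableSpace E] [BorelSpace E]
    (ν ν' ν'' : Measure E) [IsProbabilityMeasure ν] [IsProbabilityMeasure ν']
    [IsProbabilityMeasure ν''] (k : ℕ) (hk : 1 ≤ k) (ξ : E →L[ℝ] ℝ) :
    (mFourier (mconv ν (mconv (asub (aconvPow ν' k) (aconvPow ν' k)) ν'')) ξ).im = 0 ∧
    0 ≤ (mFourier (mconv ν (mconv (asub (aconvPow ν' k) (aconvPow ν' k)) ν'')) ξ).re ∧
    ‖mFourier (mconv ν (mconv ν' ν'')) ξ‖ ^ (2 * k)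
      ≤ (mFourier (mconv ν (mconv (asub (aconvPow ν' k) (aconvPow ν' k)) ν'')) ξ).re :=
  fourier_conv_nonneg_and_bound_general ν ν' ν'' k ξ
end

section
/- Let E be a finite-dimensional associative unital normed algebra over ℝ, and let ε, κ, τ, σ > 0 with σ < τ and let δ ∈ (0,1). Let η and η' be Borel probability measures on E such that η − δ^σ η' is a nonnegative Borel measure (i.e. η = δ^σ η' + ρ for some Borel measure ρ). If η satisfies NC(ε, κ, τ) at scale δ, then η' satisfies NC(ε + σ, κ, τ − σ) at scale δ. -/
open MeasureTheory

/-!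
Since `δ^σ η' ≤ η`, the measure `δ^σ η'` inherits a decomposition `ν₀ + ν₁` with `ν₀ ≤ η₀` and
`ν₁ ≤ η₁` from `η = η₀ + η₁` (a Riesz decomposition, obtained from Radon–Nikodym densities).
Multiplying by `δ^{-σ}` turns every bound `δ^τ` into `δ^{τ-σ}` and `δ^{-ε} ρ^κ` into
`δ^{-(ε+σ)} ρ^κ`; the conditions involving `δ^{±ε}` alone only get weaker as `ε` grows, as `δ ≤ 1`.
-/

open MeasureTheory

open scoped ENNReal

namespace MeasureTheory.Measure

variable {α : Type*} [MeasurableSpace α]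

theorem exists_eq_add_of_le_add {μ a b : Measure α} [SigmaFinite a] [SigmaFinite b]
    (hle : μ ≤ a + b) : ∃ ν₀ ν₁ : Measure α, μ = ν₀ + ν₁ ∧ ν₀ ≤ a ∧ ν₁ ≤ b := by
  have : SigmaFinite μ := sigmaFinite_of_le _ hle
  set f := μ.rnDeriv (a + b)
  set g := a.rnDeriv (a + b)
  have hf_le : f ≤ᵐ[a + b] g + b.rnDeriv (a + b) := by
    filter_upwards [rnDeriv_le_one_of_le hle, rnDeriv_self (a + b), rnDeriv_add' a b (a + b)]
      with x hx hself hadd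
    rw [← hadd, hself]
    exact hx
  refine ⟨(a + b).withDensity (fun x ↦ min (f x) (g x)),
    (a + b).withDensity (fun x ↦ f x - min (f x) (g x)), ?_, ?_, ?_⟩
  · calc μ = (a + b).withDensity f :=
          (withDensity_rnDeriv_eq μ (a + b) (absolutelyContinuous_of_le hle)).symm
      _ = (a + b).withDensity ((fun x ↦ min (f x) (g x)) + fun x ↦ f x - min (f x) (g x)) := by
          congr 1
          funext x
          exact (add_tsub_cancel_of_le (min_le_left _ _)).symm
      _ = _ := withDensity_add_right _ ((measurable_rnDeriv _ _).sub
          ((measurable_rnDeriv _ _).min (measurable_rnDeriv _ _)))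
  · conv_rhs => rw [← withDensity_rnDeriv_eq a (a + b)
      (absolutelyContinuous_of_le (Measure.le_add_right le_rfl))]
    exact withDensity_mono (.of_forall fun x ↦ min_le_right _ _)
  · conv_rhs => rw [← withDensity_rnDeriv_eq b (a + b)
      (absolutelyContinuous_of_le (Measure.le_add_left le_rfl))]
    refine withDensity_mono ?_
    filter_upwards [hf_le] with x hx
    rw [tsub_le_iff_right]
    rcases le_total (f x) (g x) with hfg | hgf
    · rw [min_eq_left hfg]
      exact le_add_self
    · rwa [min_eq_right hgf, add_comm]

end MeasureTheory.Measure

section NonConcentration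

variable {E : Type*} [NormedRing E] [NormedAlgebra ℝ E] [MeasurableSpace E]
  {ε κ τ σ δ : ℝ} {μ η : Measure E}

theorem NCzero.mono (hμη : μ ≤ η) (h : NCzero ε κ τ δ η) : NCzero ε κ τ δ μ :=
  ⟨(hμη _).trans h.1, fun x ↦ (hμη _).trans (h.2.1 x),
    fun ρ hρ W hW ↦ (hμη _).trans (h.2.2 ρ hρ W hW)⟩

theorem NC.mono [IsFiniteMeasure η] (hμη : μ ≤ η) (h : NC ε κ τ δ η) : NC ε κ τ δ μ := by
  obtain ⟨η₀, η₁, rfl, h₀, h₁⟩ := h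
  have : IsFiniteMeasure η₀ := isFiniteMeasure_of_le (η₀ + η₁) (Measure.le_add_right le_rfl)
  have : IsFiniteMeasure η₁ := isFiniteMeasure_of_le (η₀ + η₁) (Measure.le_add_left le_rfl)
  obtain ⟨ν₀, ν₁, rfl, hν₀, hν₁⟩ := Measure.exists_eq_add_of_le_add hμη
  exact ⟨ν₀, ν₁, rfl, h₀.mono hν₀, (hν₁ _).trans h₁⟩

theorem ofReal_rpow_neg_mul_ofReal (hδ : 0 < δ) (σ t : ℝ) {r : ℝ} :
    ENNReal.ofReal (δ ^ (-σ)) * ENNReal.ofReal (δ ^ t * r) =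
      ENNReal.ofReal (δ ^ (t - σ) * r) := by
  rw [← ENNReal.ofReal_mul (Real.rpow_nonneg hδ.le _), ← mul_assoc, ← Real.rpow_add hδ,
    neg_add_eq_sub]

theorem ofReal_rpow_neg_mul_ofReal_rpow (hδ : 0 < δ) (σ t : ℝ) :
    ENNReal.ofReal (δ ^ (-σ)) * ENNReal.ofReal (δ ^ t) = ENNReal.ofReal (δ ^ (t - σ)) := by
  simpa using ofReal_rpow_neg_mul_ofReal hδ σ t (r := 1)

theorem NCzero.rpow_neg_smul (hδ₀ : 0 < δ) (hδ₁ : δ ≤ 1) (hσ : 0 ≤ σ)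
    (h : NCzero ε κ τ δ η) :
    NCzero (ε + σ) κ (τ - σ) δ (ENNReal.ofReal (δ ^ (-σ)) • η) := by
  have hpow_le (t : ℝ) : δ ^ (t + σ) ≤ δ ^ t :=
    Real.rpow_le_rpow_of_exponent_ge hδ₀ hδ₁ (by linarith)
  obtain ⟨h_ball, h_det, h_affine⟩ := h
  refine ⟨?_, fun x ↦ ?_, fun ρ hρ W hW ↦ ?_⟩ <;> rw [Measure.smul_apply, smul_eq_mul]
  · rw [← ofReal_rpow_neg_mul_ofReal_rpow hδ₀]
    gcongr
    refine (measure_mono (Set.compl_subset_compl.mpr ?_)).trans h_ball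
    refine Metric.closedBall_subset_closedBall ?_
    convert hpow_le (-(ε + σ)) using 2
    ring
  · rw [← ofReal_rpow_neg_mul_ofReal_rpow hδ₀]
    gcongr
    exact (measure_mono fun y hy ↦ le_trans hy (hpow_le ε)).trans (h_det x)
  · rw [neg_add, ← sub_eq_add_neg, ← ofReal_rpow_neg_mul_ofReal hδ₀]
    gcongr
    exact h_affine ρ hρ W hW

theorem NC.rpow_neg_smul (hδ₀ : 0 < δ) (hδ₁ : δ ≤ 1) (hσ : 0 ≤ σ) (h : NC ε κ τ δ η) :
    NC (ε + σ) κ (τ - σ) δ (ENNReal.ofReal (δ ^ (-σ)) • η) := by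
  obtain ⟨η₀, η₁, rfl, h₀, h₁⟩ := h
  refine ⟨_, _, smul_add _ η₀ η₁, h₀.rpow_neg_smul hδ₀ hδ₁ hσ, ?_⟩
  rw [Measure.smul_apply, smul_eq_mul, ← ofReal_rpow_neg_mul_ofReal_rpow hδ₀]
  gcongr

end NonConcentration

theorem NC_of_component_general
    {E : Type*} [NormedRing E] [NormedAlgebra ℝ E]
    [MeasurableSpace E]
    (ε κ τ σ δ : ℝ) (hσ : 0 < σ)
    (hδ : δ ∈ Set.Ioo (0 : ℝ) 1)
    (η η' : Measure E) [IsProbabilityMeasure η]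
    (hsum : ∃ ρ : Measure E, η = (ENNReal.ofReal (δ ^ σ)) • η' + ρ)
    (hNC : NC ε κ τ δ η) :
    NC (ε + σ) κ (τ - σ) δ η' := by
  obtain ⟨ρ, hρ⟩ := hsum
  have hle : ENNReal.ofReal (δ ^ σ) • η' ≤ η := hρ ▸ Measure.le_add_right le_rfl
  have h := (hNC.mono hle).rpow_neg_smul hδ.1 hδ.2.le hσ.le
  rwa [smul_smul, ← ENNReal.ofReal_mul (Real.rpow_nonneg hδ.1.le _), ← Real.rpow_add hδ.1,
    neg_add_cancel, Real.rpow_zero, ENNReal.ofReal_one, one_smul] at h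

/-- **Absorbing a component of a measure preserves non-concentration**
(Lemma "eta'NC" of the paper): if `η = δ^σ η' + ρ` and `η` satisfies `NC(ε, κ, τ)` at
scale `δ`, then `η'` satisfies `NC(ε + σ, κ, τ − σ)` at scale `δ`. -/
theorem NC_of_component
    {E : Type*} [NormedRing E] [NormedAlgebra ℝ E] [FiniteDimensional ℝ E]
    [MeasurableSpace E] [BorelSpace E]
    (ε κ τ σ δ : ℝ) (hε : 0 < ε) (hκ : 0 < κ) (hτ : 0 < τ) (hσ : 0 < σ) (hστ : σ < τ)
    (hδ : δ ∈ Set.Ioo (0 : ℝ) 1)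
    (η η' : Measure E) [IsProbabilityMeasure η] [IsProbabilityMeasure η']
    (hsum : ∃ ρ : Measure E, η = (ENNReal.ofReal (δ ^ σ)) • η' + ρ)
    (hNC : NC ε κ τ δ η) :
    NC (ε + σ) κ (τ - σ) δ η' :=
  NC_of_component_general ε κ τ σ δ hσ hδ η η' hsum hNC
end

section
/- Let E be a finite-dimensional associative unital normed algebra over ℝ and let ε, κ, τ > 0. (1) There exists δ₀ > 0, depending only on τ, such that for every δ ∈ (0, δ₀): if a Borel probability measure η on E satisfies NC(ε, κ, τ) at scale δ, then η ⊟ η satisfies NC(2ε, κ, τ/2) at scale δ. (2) For every δ > 0, if Borel probability measures η and η' on E both satisfy NC(ε, κ, τ) at scale δ and θ ∈ [0,1], then θη + (1−θ)η' satisfies NC(ε, κ, τ) at scale δ. -/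
open MeasureTheory
open ENNReal

noncomputable section

variable {E : Type*} [NormedRing E] [NormedAlgebra ℝ E] [FiniteDimensional ℝ E]
  [MeasurableSpace E] [BorelSpace E]


lemma continuous_algDet : Continuous (algDet : E → ℝ) := by
  have h : (algDet : E → ℝ) = fun x => (ContinuousLinearMap.mul ℝ E x).det := by
    funext x
    have h2 : ((ContinuousLinearMap.mul ℝ E x : E →L[ℝ] E) : E →ₗ[ℝ] E)
        = LinearMap.mulLeft ℝ x := LinearMap.ext fun y => rfl
    simp only [ContinuousLinearMap.det, h2, algDet]
  rw [h]
  exact ContinuousLinearMap.continuous_det.comp (ContinuousLinearMap.mul ℝ E).continuous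

lemma abs_algDet_neg (z : E) : |algDet (-z)| = |algDet z| := by
  unfold algDet
  have h : LinearMap.mulLeft ℝ (-z) = (-1 : ℝ) • LinearMap.mulLeft ℝ z :=
    LinearMap.ext fun y => by simp [neg_mul]
  rw [h, LinearMap.det_smul, abs_mul, abs_pow, abs_neg, abs_one, one_pow, one_mul]

lemma measurableSet_detSet (c : E) (t : ℝ) :
    MeasurableSet {y : E | |algDet (y - c)| ≤ t} :=
  (isClosed_le ((continuous_algDet.comp (continuous_id.sub continuous_const)).abs)
    continuous_const).measurableSet

lemma isClosed_tube (W : AffineSubspace ℝ E) (ρ : ℝ) :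
    IsClosed {x : E | ∃ w ∈ (W : Set E), dist x w ≤ ρ} := by
  rcases Set.eq_empty_or_nonempty (W : Set E) with h | h
  · simp [h]
  · have hcl : IsClosed (W : Set E) := W.closed_of_finiteDimensional
    have hs : {x : E | ∃ w ∈ (W : Set E), dist x w ≤ ρ}
        = {x : E | Metric.infDist x (W : Set E) ≤ ρ} := by
      ext x
      constructor
      · rintro ⟨w, hw, hd⟩
        exact le_trans (Metric.infDist_le_dist_of_mem hw) hd
      · intro hx
        obtain ⟨w, hw, he⟩ := hcl.exists_infDist_eq_dist h x
        exact ⟨w, hw, he ▸ hx⟩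
    rw [hs]
    exact isClosed_le (Metric.continuous_infDist_pt _) continuous_const

lemma asub_eq_map (η : Measure E) [SFinite η] :
    (η.bind fun x => η.map fun y => x - y)
      = Measure.map (fun p : E × E => p.1 - p.2) (η.prod η) := by
  have hT : Measurable fun p : E × E => p.1 - p.2 := measurable_fst.sub measurable_snd
  have hker : Measurable fun x : E => η.map fun y => x - y := by
    apply Measure.measurable_of_measurable_coe
    intro s hs
    have heq : (fun x : E => (η.map fun y => x - y) s)
        = fun x : E => η (Prod.mk x ⁻¹' ((fun p : E × E => p.1 - p.2) ⁻¹' s)) :=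
      funext fun x => Measure.map_apply (measurable_const.sub measurable_id') hs
    rw [heq]
    exact measurable_measure_prodMk_left (ν := η) (hT hs)
  refine Measure.ext fun s hs => ?_
  rw [Measure.bind_apply hs hker.aemeasurable, Measure.map_apply hT hs, Measure.prod_apply (hT hs)]
  refine lintegral_congr fun x => ?_
  rw [Measure.map_apply (show Measurable fun y : E => x - y from measurable_const.sub measurable_id') hs]
  rfl

lemma map_sub_prod_le (μ : Measure E) [SFinite μ] {A : Set E} (hA : MeasurableSet A)
    {B : ℝ≥0∞} (h : ∀ x : E, μ {y | x - y ∈ A} ≤ B) :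
    Measure.map (fun p : E × E => p.1 - p.2) (μ.prod μ) A ≤ B * μ Set.univ := by
  have hT : Measurable fun p : E × E => p.1 - p.2 := measurable_fst.sub measurable_snd
  rw [Measure.map_apply hT hA, Measure.prod_apply (hT hA)]
  calc ∫⁻ x, μ (Prod.mk x ⁻¹' ((fun p : E × E => p.1 - p.2) ⁻¹' A)) ∂μ
      ≤ ∫⁻ _, B ∂μ := lintegral_mono fun x => h x
    _ = B * μ Set.univ := lintegral_const B

lemma combo_le {a b : ℝ≥0∞} {θ : ℝ} (hθ0 : 0 ≤ θ) (hθ1 : θ ≤ 1) {B : ℝ≥0∞}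
    (ha : a ≤ B) (hb : b ≤ B) :
    ENNReal.ofReal θ * a + ENNReal.ofReal (1 - θ) * b ≤ B := by
  calc ENNReal.ofReal θ * a + ENNReal.ofReal (1 - θ) * b
      ≤ ENNReal.ofReal θ * B + ENNReal.ofReal (1 - θ) * B := by gcongr
    _ = (ENNReal.ofReal θ + ENNReal.ofReal (1 - θ)) * B := (add_mul _ _ _).symm
    _ = 1 * B := by rw [← ENNReal.ofReal_add hθ0 (by linarith)]; norm_num
    _ = B := one_mul B


end

noncomputable section

/-- **Stability of non-concentration under difference and convex combination**
(Lemma "ppffNC" of the paper):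
(1) for every `τ > 0` there is `δ₀ > 0`, depending only on `τ`, such that for all
`ε, κ > 0` and all scales `δ ∈ (0, δ₀)`, if `η` satisfies `NC(ε, κ, τ)` at scale `δ`
then `η ⊟ η` satisfies `NC(2ε, κ, τ/2)` at scale `δ`;
(2) convex combinations of measures satisfying `NC(ε, κ, τ)` at scale `δ` also satisfy
`NC(ε, κ, τ)` at scale `δ`. -/
theorem NC_asub_and_convex
    {E : Type*} [NormedRing E] [NormedAlgebra ℝ E] [FiniteDimensional ℝ E]
    [MeasurableSpace E] [BorelSpace E] :
    (∀ τ : ℝ, 0 < τ → ∃ δ₀ > (0 : ℝ), ∀ ε κ : ℝ, 0 < ε → 0 < κ →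
      ∀ δ : ℝ, 0 < δ → δ < δ₀ →
        ∀ η : Measure E, IsProbabilityMeasure η →
          NC ε κ τ δ η → NC (2 * ε) κ (τ / 2) δ (asub η η)) ∧
    (∀ ε κ τ : ℝ, 0 < ε → 0 < κ → 0 < τ → ∀ δ : ℝ, 0 < δ →
      ∀ η η' : Measure E, IsProbabilityMeasure η → IsProbabilityMeasure η' →
        NC ε κ τ δ η → NC ε κ τ δ η' →
        ∀ θ : ℝ, 0 ≤ θ → θ ≤ 1 →
          NC ε κ τ δ (ENNReal.ofReal θ • η + ENNReal.ofReal (1 - θ) • η')) := by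
  constructor
  · -- Part (1)
    intro τ hτ
    rcases subsingleton_or_nontrivial E with hE | hE
    · -- Subsingleton case: everything degenerates.
      refine ⟨1/2, by norm_num, ?_⟩
      intro ε κ hε hκ δ hδ hδlt η hη _
      have hδ1 : δ < 1 := by linarith
      refine ⟨asub η η, 0, (add_zero _).symm, ⟨?_, ?_, ?_⟩, by simp⟩
      · have hempty : (Metric.closedBall (0 : E) (δ ^ (-(2*ε))))ᶜ = (∅ : Set E) := by
          ext x
          simp only [Set.mem_compl_iff, Metric.mem_closedBall, not_le,
            Set.mem_empty_iff_false, iff_false, not_lt]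
          have hx : x = 0 := Subsingleton.elim x 0
          rw [hx, dist_self]
          positivity
        rw [hempty]
        simp
      · intro x
        have hempty : {y : E | |algDet (y - x)| ≤ δ ^ (2*ε)} = (∅ : Set E) := by
          ext y
          simp only [Set.mem_setOf_eq, Set.mem_empty_iff_false, iff_false, not_le]
          have h1 : algDet (y - x) = 1 := LinearMap.det_eq_one_of_subsingleton _
          rw [h1, abs_one]
          exact Real.rpow_lt_one hδ.le hδ1 (by positivity)
        rw [hempty]
        simp
      · intro ρ hρ W hW
        have hempty : {x : E | ∃ w ∈ (W : Set E), dist x w ≤ ρ} = (∅ : Set E) := by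
          ext x
          simp only [Set.mem_setOf_eq, Set.mem_empty_iff_false, iff_false]
          rintro ⟨w, hw, -⟩
          apply hW
          refine le_antisymm le_top ?_
          intro p _
          have : p = w := Subsingleton.elim p w
          rwa [this]
        rw [hempty]
        simp
    · -- Nontrivial case.
      have hdet0 : algDet (0 : E) = 0 := by
        unfold algDet
        have h0 : LinearMap.mulLeft ℝ (0:E) = 0 := LinearMap.ext fun y => zero_mul y
        rw [h0, LinearMap.det_zero]
        exact zero_pow Module.finrank_pos.ne'
      obtain ⟨r, hr0, hr⟩ : ∃ r > 0, ∀ z : E, ‖z‖ < r → |algDet z| < 1/2 := by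
        have hca : ContinuousAt (algDet : E → ℝ) 0 := (continuous_algDet (E := E)).continuousAt
        have hc := Metric.continuousAt_iff.mp hca (1/2) (by norm_num)
        obtain ⟨r, hr0, h⟩ := hc
        refine ⟨r, hr0, fun z hz => ?_⟩
        have := h (x := z) (by rwa [dist_zero_right])
        rwa [hdet0, Real.dist_eq, sub_zero] at this
      obtain ⟨t, ht⟩ := (isCompact_closedBall (0:E) 2).elim_finite_subcover
        (fun c : E => Metric.ball c r) (fun _ => Metric.isOpen_ball)
        (fun x _ => Set.mem_iUnion.2 ⟨x, Metric.mem_ball_self hr0⟩)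
      set N := t.card with hN
      refine ⟨min ((1/3 : ℝ) ^ (2/τ)) (min ((((N:ℝ)+3)⁻¹) ^ (1/τ)) (1/2)), ?_, ?_⟩
      · have h1 : (0:ℝ) < (1/3 : ℝ) ^ (2/τ) := Real.rpow_pos_of_pos (by norm_num) _
        have h2 : (0:ℝ) < (((N:ℝ)+3)⁻¹) ^ (1/τ) := Real.rpow_pos_of_pos (by positivity) _
        simp only [lt_min_iff]
        exact ⟨h1, h2, by norm_num⟩
      intro ε κ hε hκ δ hδ hδlt η hη hNC
      obtain ⟨η₀, η₁, hsum, ⟨hi, hii, hiii⟩, hmass⟩ := hNC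
      have hδhalf : δ < 1/2 :=
        lt_of_lt_of_le hδlt (le_trans (min_le_right _ _) (min_le_right _ _))
      have hδ1 : δ < 1 := by linarith
      have hδle1 : δ ≤ 1 := hδ1.le
      have hηu : η₀ Set.univ + η₁ Set.univ = 1 := by
        rw [← Measure.add_apply, ← hsum, measure_univ]
      have h0le : η₀ Set.univ ≤ 1 := by
        calc η₀ Set.univ ≤ η₀ Set.univ + η₁ Set.univ := le_self_add
          _ = 1 := hηu
      have h1le : η₁ Set.univ ≤ 1 := by
        calc η₁ Set.univ ≤ η₀ Set.univ + η₁ Set.univ := le_add_self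
          _ = 1 := hηu
      haveI hf0 : IsFiniteMeasure η₀ := ⟨lt_of_le_of_lt h0le ENNReal.one_lt_top⟩
      haveI hf1 : IsFiniteMeasure η₁ := ⟨lt_of_le_of_lt h1le ENNReal.one_lt_top⟩
      set e := ENNReal.ofReal (δ ^ τ) with he
      have hδτpos : 0 < δ ^ τ := Real.rpow_pos_of_pos hδ τ
      have hδτ2pos : 0 < δ ^ (τ/2) := Real.rpow_pos_of_pos hδ _
      have hhalfτ : δ ^ (τ/2) ≤ 1/3 := by
        have h1 : δ ^ (τ/2) ≤ ((1/3:ℝ) ^ (2/τ)) ^ (τ/2) :=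
          Real.rpow_le_rpow hδ.le (le_trans hδlt.le (min_le_left _ _)) (by positivity)
        rwa [← Real.rpow_mul (by norm_num : (0:ℝ) ≤ 1/3),
          show (2/τ) * (τ/2) = 1 by field_simp, Real.rpow_one] at h1
      have hττ2 : δ ^ τ = δ ^ (τ/2) * δ ^ (τ/2) := by
        rw [← Real.rpow_add hδ]; norm_num
      have h3e : e + e + e ≤ ENNReal.ofReal (δ ^ (τ/2)) := by
        rw [he, ← ENNReal.ofReal_add hδτpos.le hδτpos.le,
          ← ENNReal.ofReal_add (by positivity) hδτpos.le]
        apply ENNReal.ofReal_le_ofReal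
        nlinarith [hδτ2pos.le]
      have h2e : e + e ≤ ENNReal.ofReal (δ ^ (τ/2)) :=
        le_trans (le_add_right le_rfl) h3e
      have h1e : e ≤ ENNReal.ofReal (δ ^ (τ/2)) :=
        le_trans (le_add_right le_rfl) h2e
      by_cases hcase : δ ^ ε ≤ 1/2
      · -- Main case.
        have hT : Measurable fun p : E × E => p.1 - p.2 := measurable_fst.sub measurable_snd
        have hprod : η.prod η
            = η₀.prod η₀ + (η₀.prod η₁ + (η₁.prod η₀ + η₁.prod η₁)) := by
          rw [hsum, Measure.prod_add, Measure.add_prod, Measure.add_prod]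
          abel
        have hdecomp : asub η η
            = Measure.map (fun p : E × E => p.1 - p.2) (η₀.prod η₀)
              + Measure.map (fun p : E × E => p.1 - p.2)
                (η₀.prod η₁ + (η₁.prod η₀ + η₁.prod η₁)) := by
          rw [asub, asub_eq_map, hprod, Measure.map_add _ _ hT]
        refine ⟨_, _, hdecomp, ⟨?_, ?_, ?_⟩, ?_⟩
        · -- (i)
          have hsub2 : 2 ≤ δ ^ (-ε) := by
            rw [Real.rpow_neg hδ.le, show (2:ℝ) = (1/2)⁻¹ by norm_num]
            exact inv_anti₀ (Real.rpow_pos_of_pos hδ ε) hcase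
          have hkey : 2 * δ ^ (-ε) ≤ δ ^ (-(2*ε)) := by
            have hm : δ ^ (-(2*ε)) = δ ^ (-ε) * δ ^ (-ε) := by
              rw [← Real.rpow_add hδ]; ring_nf
            rw [hm]; nlinarith
          have hpre : (fun p : E × E => p.1 - p.2) ⁻¹'
                (Metric.closedBall (0:E) (δ ^ (-(2*ε))))ᶜ
              ⊆ ((Metric.closedBall (0:E) (δ ^ (-ε)))ᶜ ×ˢ Set.univ)
                ∪ (Set.univ ×ˢ (Metric.closedBall (0:E) (δ ^ (-ε)))ᶜ) := by
            rintro ⟨x, y⟩ hp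
            simp only [Set.mem_preimage, Set.mem_compl_iff, Metric.mem_closedBall,
              dist_zero_right, not_le] at hp
            by_contra hcon
            simp only [Set.mem_union, Set.mem_prod, Set.mem_univ, and_true, true_and,
              Set.mem_compl_iff, Metric.mem_closedBall, dist_zero_right, not_le,
              not_or, not_lt] at hcon
            have hb : ‖x - y‖ ≤ 2 * δ ^ (-ε) := by
              calc ‖x - y‖ ≤ ‖x‖ + ‖y‖ := norm_sub_le x y
                _ ≤ δ ^ (-ε) + δ ^ (-ε) := add_le_add hcon.1 hcon.2
                _ = 2 * δ ^ (-ε) := by ring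
            linarith
          calc Measure.map (fun p : E × E => p.1 - p.2) (η₀.prod η₀)
                ((Metric.closedBall (0:E) (δ ^ (-(2*ε))))ᶜ)
              = (η₀.prod η₀) ((fun p : E × E => p.1 - p.2) ⁻¹'
                  (Metric.closedBall (0:E) (δ ^ (-(2*ε))))ᶜ) :=
                Measure.map_apply hT measurableSet_closedBall.compl
            _ ≤ (η₀.prod η₀) (((Metric.closedBall (0:E) (δ ^ (-ε)))ᶜ ×ˢ Set.univ)
                  ∪ (Set.univ ×ˢ (Metric.closedBall (0:E) (δ ^ (-ε)))ᶜ)) :=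
                measure_mono hpre
            _ ≤ (η₀.prod η₀) ((Metric.closedBall (0:E) (δ ^ (-ε)))ᶜ ×ˢ Set.univ)
                  + (η₀.prod η₀) (Set.univ ×ˢ (Metric.closedBall (0:E) (δ ^ (-ε)))ᶜ) :=
                measure_union_le _ _
            _ = η₀ ((Metric.closedBall (0:E) (δ ^ (-ε)))ᶜ) * η₀ Set.univ
                  + η₀ Set.univ * η₀ ((Metric.closedBall (0:E) (δ ^ (-ε)))ᶜ) := by
                rw [Measure.prod_prod, Measure.prod_prod]
            _ ≤ e * 1 + 1 * e := add_le_add (mul_le_mul' hi h0le) (mul_le_mul' h0le hi)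
            _ = e + e := by rw [mul_one, one_mul]
            _ ≤ ENNReal.ofReal (δ ^ (τ/2)) := h2e
        · -- (ii)
          intro c
          have hslice : ∀ x : E,
              η₀ {y : E | x - y ∈ {z : E | |algDet (z - c)| ≤ δ ^ (2*ε)}} ≤ e := by
            intro x
            have hss : {y : E | x - y ∈ {z : E | |algDet (z - c)| ≤ δ ^ (2*ε)}}
                ⊆ {y : E | |algDet (y - (x - c))| ≤ δ ^ ε} := by
              intro y hy
              simp only [Set.mem_setOf_eq] at hy ⊢
              have heq : x - y - c = -(y - (x - c)) := by abel
              rw [heq, abs_algDet_neg] at hy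
              exact hy.trans (Real.rpow_le_rpow_of_exponent_ge hδ hδle1 (by linarith))
            exact le_trans (measure_mono hss) (hii (x - c))
          refine le_trans (map_sub_prod_le η₀ (measurableSet_detSet c _) hslice) ?_
          calc e * η₀ Set.univ ≤ e * 1 := mul_le_mul' le_rfl h0le
            _ = e := mul_one e
            _ ≤ ENNReal.ofReal (δ ^ (τ/2)) := h1e
        · -- (iii)
          intro ρ hρ W hW
          have hρ0 : (0:ℝ) ≤ ρ := le_trans hδ.le hρ
          have hslice : ∀ x : E,
              η₀ {y : E | x - y ∈ {z : E | ∃ w ∈ (W : Set E), dist z w ≤ ρ}}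
                ≤ ENNReal.ofReal (δ ^ (-ε) * ρ ^ κ) := by
            intro x
            set W' := W.map (AffineEquiv.constVSub ℝ x).toAffineMap with hW'def
            have hWne : W' ≠ ⊤ := by
              intro htop
              apply hW
              have h1 : (AffineEquiv.constVSub ℝ x) '' (W : Set E) = Set.univ := by
                rw [← AffineEquiv.coe_toAffineMap, ← AffineSubspace.coe_map, ← hW'def,
                  htop, AffineSubspace.top_coe]
              have h2 : (W : Set E) = Set.univ := by
                have h3 := congrArg (Set.preimage (AffineEquiv.constVSub ℝ x)) h1
                rwa [Set.preimage_image_eq _ (AffineEquiv.constVSub ℝ x).injective,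
                  Set.preimage_univ] at h3
              refine le_antisymm le_top fun p _ => ?_
              have : p ∈ (W : Set E) := h2.symm ▸ Set.mem_univ p
              exact this
            have hset : {y : E | x - y ∈ {z : E | ∃ w ∈ (W : Set E), dist z w ≤ ρ}}
                = {z : E | ∃ w ∈ (W' : Set E), dist z w ≤ ρ} := by
              ext y
              simp only [Set.mem_setOf_eq, hW'def, AffineSubspace.coe_map,
                AffineEquiv.coe_toAffineMap, Set.mem_image, AffineEquiv.coe_constVSub]
              constructor
              · rintro ⟨w, hw, hd⟩
                refine ⟨x - w, ⟨w, hw, by rw [vsub_eq_sub]⟩, ?_⟩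
                rw [dist_eq_norm] at hd ⊢
                rwa [show y - (x - w) = -(x - y - w) by abel, norm_neg]
              · rintro ⟨w', ⟨w, hw, hww⟩, hd⟩
                refine ⟨w, hw, ?_⟩
                rw [vsub_eq_sub] at hww
                rw [dist_eq_norm] at hd ⊢
                rw [← hww] at hd
                rwa [show y - (x - w) = -(x - y - w) by abel, norm_neg] at hd
            rw [hset]
            exact hiii ρ hρ W' hWne
          refine le_trans (map_sub_prod_le η₀ (isClosed_tube W ρ).measurableSet hslice) ?_
          calc ENNReal.ofReal (δ ^ (-ε) * ρ ^ κ) * η₀ Set.univ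
              ≤ ENNReal.ofReal (δ ^ (-ε) * ρ ^ κ) * 1 := mul_le_mul' le_rfl h0le
            _ = ENNReal.ofReal (δ ^ (-ε) * ρ ^ κ) := mul_one _
            _ ≤ ENNReal.ofReal (δ ^ (-(2*ε)) * ρ ^ κ) := by
                apply ENNReal.ofReal_le_ofReal
                apply mul_le_mul_of_nonneg_right
                  (Real.rpow_le_rpow_of_exponent_ge hδ hδle1 (by linarith))
                positivity
        · -- mass of the remainder
          rw [Measure.map_apply hT MeasurableSet.univ, Set.preimage_univ]
          have hu1 : (η₀.prod η₁) Set.univ = η₀ Set.univ * η₁ Set.univ := by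
            rw [← Set.univ_prod_univ, Measure.prod_prod]
          have hu2 : (η₁.prod η₀) Set.univ = η₁ Set.univ * η₀ Set.univ := by
            rw [← Set.univ_prod_univ, Measure.prod_prod]
          have hu3 : (η₁.prod η₁) Set.univ = η₁ Set.univ * η₁ Set.univ := by
            rw [← Set.univ_prod_univ, Measure.prod_prod]
          have he1 : e ≤ 1 := by
            rw [he, ← ENNReal.ofReal_one]
            exact ENNReal.ofReal_le_ofReal (Real.rpow_le_one hδ.le hδle1 hτ.le)
          calc (η₀.prod η₁ + (η₁.prod η₀ + η₁.prod η₁)) Set.univ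
              = η₀ Set.univ * η₁ Set.univ + (η₁ Set.univ * η₀ Set.univ
                + η₁ Set.univ * η₁ Set.univ) := by
                simp only [Measure.add_apply, hu1, hu2, hu3]
            _ ≤ 1 * e + (e * 1 + e * e) := by
                refine add_le_add (mul_le_mul' h0le hmass)
                  (add_le_add (mul_le_mul' hmass h0le) (mul_le_mul' hmass hmass))
            _ ≤ 1 * e + (e * 1 + e * 1) := by
                exact add_le_add le_rfl (add_le_add le_rfl (mul_le_mul' le_rfl he1))
            _ = e + e + e := by ring
            _ ≤ ENNReal.ofReal (δ ^ (τ/2)) := h3e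
      · -- Contradiction case: δ^ε > 1/2 is impossible for small δ.
        exfalso
        have hhalf : 1/2 < δ ^ ε := not_le.mp hcase
        have hinv : δ ^ (-ε) ≤ 2 := by
          rw [Real.rpow_neg hδ.le, show (2:ℝ) = (1/2)⁻¹ by norm_num]
          exact inv_anti₀ (by norm_num) hhalf.le
        have hcb : Metric.closedBall (0:E) (δ ^ (-ε)) ⊆ Metric.closedBall 0 2 :=
          Metric.closedBall_subset_closedBall hinv
        have h5 : η₀ ((Metric.closedBall (0:E) 2)ᶜ) ≤ e :=
          le_trans (measure_mono (Set.compl_subset_compl.mpr hcb)) hi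
        have h6 : η₀ (Metric.closedBall (0:E) 2) ≤ N * e := by
          calc η₀ (Metric.closedBall (0:E) 2)
              ≤ η₀ (⋃ i ∈ t, Metric.ball i r) := measure_mono ht
            _ ≤ ∑ i ∈ t, η₀ (Metric.ball i r) := measure_biUnion_finset_le t _
            _ ≤ ∑ _i ∈ t, e := by
                refine Finset.sum_le_sum fun i _ => ?_
                refine le_trans (measure_mono ?_) (hii i)
                intro y hy
                rw [Metric.mem_ball, dist_eq_norm] at hy
                exact le_trans (hr _ hy).le (by linarith)
            _ = N * e := by rw [Finset.sum_const, nsmul_eq_mul, hN]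
        have h7 : (1:ℝ≥0∞) ≤ ((N:ℝ≥0∞) + 2) * e := by
          have hsplit : η₀ (Metric.closedBall (0:E) 2)
              + η₀ ((Metric.closedBall (0:E) 2)ᶜ) = η₀ Set.univ :=
            measure_add_measure_compl measurableSet_closedBall
          calc (1:ℝ≥0∞) = η₀ Set.univ + η₁ Set.univ := hηu.symm
            _ = (η₀ (Metric.closedBall (0:E) 2) + η₀ ((Metric.closedBall (0:E) 2)ᶜ))
                + η₁ Set.univ := by rw [hsplit]
            _ ≤ ((N:ℝ≥0∞) * e + e) + e := add_le_add (add_le_add h6 h5) hmass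
            _ = ((N:ℝ≥0∞) + 2) * e := by ring
        have hδτ : δ ^ τ ≤ ((N:ℝ)+3)⁻¹ := by
          have h1 : δ ^ τ ≤ (((((N:ℝ)+3)⁻¹)) ^ (1/τ)) ^ τ :=
            Real.rpow_le_rpow hδ.le
              (le_trans hδlt.le (le_trans (min_le_right _ _) (min_le_left _ _))) hτ.le
          rwa [← Real.rpow_mul (by positivity), one_div, inv_mul_cancel₀ hτ.ne',
            Real.rpow_one] at h1
        have hfin : ((N:ℝ≥0∞) + 2) * e < 1 := by
          have hlt : ((N:ℝ)+2) * δ ^ τ < 1 := by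
            have hN3 : (0:ℝ) < (N:ℝ)+3 := by positivity
            calc ((N:ℝ)+2) * δ ^ τ ≤ ((N:ℝ)+2) * ((N:ℝ)+3)⁻¹ := by
                  apply mul_le_mul_of_nonneg_left hδτ (by positivity)
              _ < 1 := by
                  rw [mul_inv_lt_iff₀ hN3]
                  linarith
          have heq : ((N:ℝ≥0∞) + 2) * e = ENNReal.ofReal (((N:ℝ)+2) * δ ^ τ) := by
            rw [ENNReal.ofReal_mul (by positivity), ENNReal.ofReal_add (by positivity)
              (by norm_num), ENNReal.ofReal_natCast, ENNReal.ofReal_ofNat]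
          rw [heq]
          exact ENNReal.ofReal_lt_one.mpr hlt
        exact lt_irrefl (1:ℝ≥0∞) (lt_of_le_of_lt h7 hfin)
  · -- Part (2)
    intro ε κ τ hε hκ hτ δ hδ η η' hη hη' hNC hNC' θ hθ0 hθ1
    obtain ⟨η₀, η₁, h1, ⟨ha, hb, hc⟩, h2⟩ := hNC
    obtain ⟨η₀', η₁', h1', ⟨ha', hb', hc'⟩, h2'⟩ := hNC'
    refine ⟨ENNReal.ofReal θ • η₀ + ENNReal.ofReal (1-θ) • η₀',
      ENNReal.ofReal θ • η₁ + ENNReal.ofReal (1-θ) • η₁', ?_, ⟨?_, ?_, ?_⟩, ?_⟩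
    · rw [h1, h1', smul_add, smul_add]
      abel
    · simp only [Measure.add_apply, Measure.smul_apply, smul_eq_mul]
      exact combo_le hθ0 hθ1 ha ha'
    · intro x
      simp only [Measure.add_apply, Measure.smul_apply, smul_eq_mul]
      exact combo_le hθ0 hθ1 (hb x) (hb' x)
    · intro ρ hρ W hW
      simp only [Measure.add_apply, Measure.smul_apply, smul_eq_mul]
      exact combo_le hθ0 hθ1 (hc ρ hρ W hW) (hc' ρ hρ W hW)
    · simp only [Measure.add_apply, Measure.smul_apply, smul_eq_mul]
      exact combo_le hθ0 hθ1 h2 h2'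


end
end
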